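/- Let Y_F > 0, Y_B > 0, L > 0, η ≠ 0, P > 0, and N₀ > 0 be real numbers. Define Ā_F(N) = (η/√N)·S_N(Y_F, L) and Ā_B(N) = (η/√N)·S_N(Y_B, L), and the multiplexing gain G_M(N) = (P/(2·N₀))·Ā_F(N)²·Ā_B(N)². Then N²·G_M(N) / (ln N)⁴ tends to P·η⁴/(2·N₀·L⁴) as N tends to infinity. In particular the multiplexing gain of the C-PASS scales as Θ(P·(ln N)⁴/N²) (the multiplexing-gain part of Theorem 2). -/

import Mathlib

open Filter Finset

/-- The phase-aligned channel sum `S_N(Y, L) = ∑_{n=1}^N 1/√(Y² + L²·n²)`. -/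
noncomputable def channelSum (Y L : ℝ) (N : ℕ) : ℝ :=
  ∑ n ∈ Finset.Icc 1 N, 1 / Real.sqrt (Y^2 + L^2 * (n : ℝ)^2)

lemma channelSum_le (Y L : ℝ) (hY : 0 < Y) (hL : 0 < L) (N : ℕ) :
    channelSum Y L N ≤ (1/L) * (1 + Real.log N) := by
  have h1 : channelSum Y L N ≤ (1/L) * (harmonic N : ℝ) := by
    rw [harmonic_eq_sum_Icc]
    push_cast
    rw [Finset.mul_sum]
    apply Finset.sum_le_sum
    intro n hn
    have hn1 : 1 ≤ n := (Finset.mem_Icc.mp hn).1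
    have hnpos : (0:ℝ) < n := by positivity
    have hLn : (0:ℝ) < L * n := by positivity
    have hsq : Real.sqrt (Y^2 + L^2 * (n:ℝ)^2) ≥ L * n := by
      rw [show L * (n:ℝ) = Real.sqrt ((L * n)^2) by
        rw [Real.sqrt_sq hLn.le]]
      apply Real.sqrt_le_sqrt
      nlinarith [sq_nonneg Y]
    have hrw : (1:ℝ)/L * (n:ℝ)⁻¹ = 1/(L*n) := by field_simp
    calc 1 / Real.sqrt (Y^2 + L^2 * (n:ℝ)^2)
        ≤ 1 / (L * n) := one_div_le_one_div_of_le hLn hsq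
      _ = 1/L * (n:ℝ)⁻¹ := hrw.symm
  refine h1.trans ?_
  have := harmonic_le_one_add_log N
  have h2 : (0:ℝ) ≤ 1/L := by positivity
  nlinarith [this]

lemma le_channelSum (Y L : ℝ) (hY : 0 < Y) (hL : 0 < L) (N : ℕ) :
    (1/L) * (Real.log ((N:ℝ) + 1 + Y/L) - Real.log (1 + Y/L)) ≤ channelSum Y L N := by
  set c := Y / L with hc
  have hcpos : 0 < c := by positivity
  have key : ∀ n ∈ Finset.Icc 1 N,
      (1/L) * (Real.log ((n:ℝ) + 1 + c) - Real.log ((n:ℝ) + c))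
        ≤ 1 / Real.sqrt (Y^2 + L^2 * (n : ℝ)^2) := by
    intro n hn
    have hn1 : 1 ≤ n := (Finset.mem_Icc.mp hn).1
    have hnpos : (0:ℝ) < n := by positivity
    have hx : (0:ℝ) < (n:ℝ) + c := by positivity
    have hlog : Real.log ((n:ℝ) + 1 + c) - Real.log ((n:ℝ) + c) ≤ 1 / ((n:ℝ) + c) := by
      rw [← Real.log_div (by positivity) (by positivity)]
      have := Real.log_le_sub_one_of_pos
        (show 0 < ((n:ℝ) + 1 + c) / ((n:ℝ) + c) by positivity)
      refine this.trans ?_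
      rw [div_sub_one hx.ne', div_le_div_iff₀ hx hx]
      ring_nf
      nlinarith
    have hsqrt : Real.sqrt (Y^2 + L^2 * (n:ℝ)^2) ≤ L * ((n:ℝ) + c) := by
      rw [show L * ((n:ℝ) + c) = Real.sqrt ((L * ((n:ℝ) + c))^2) by
        rw [Real.sqrt_sq (by positivity)]]
      apply Real.sqrt_le_sqrt
      have h2 : (L * c)^2 = Y^2 := by
        rw [show L * c = Y by rw [hc]; field_simp [hL.ne']]
      nlinarith [h2, mul_pos (mul_pos (mul_pos hL hL) hnpos) hcpos]
    have hspos : (0:ℝ) < Real.sqrt (Y^2 + L^2 * (n:ℝ)^2) := by positivity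
    calc (1/L) * (Real.log ((n:ℝ) + 1 + c) - Real.log ((n:ℝ) + c))
        ≤ (1/L) * (1 / ((n:ℝ) + c)) := by
          apply mul_le_mul_of_nonneg_left hlog (by positivity)
      _ = 1 / (L * ((n:ℝ) + c)) := by field_simp
      _ ≤ 1 / Real.sqrt (Y^2 + L^2 * (n:ℝ)^2) := by
          apply one_div_le_one_div_of_le hspos hsqrt
  calc (1/L) * (Real.log ((N:ℝ) + 1 + c) - Real.log (1 + c))
      = ∑ n ∈ Finset.Icc 1 N,
          (1/L) * (Real.log ((n:ℝ) + 1 + c) - Real.log ((n:ℝ) + c)) := by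
        rw [← Finset.mul_sum]
        congr 1
        rw [show Finset.Icc 1 N = Finset.Ico 1 (N+1) by rfl,
          Finset.sum_Ico_eq_sum_range]
        simp only [Nat.add_sub_cancel]
        have h := Finset.sum_range_sub (fun i : ℕ => Real.log ((i:ℝ) + 1 + c)) N
        rw [eq_comm]
        calc ∑ x ∈ Finset.range N,
              (Real.log ((↑(1+x):ℝ) + 1 + c) - Real.log ((↑(1+x):ℝ) + c))
            = ∑ i ∈ Finset.range N,
              (Real.log ((↑(i+1):ℝ) + 1 + c) - Real.log ((i:ℝ) + 1 + c)) := by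
              apply Finset.sum_congr rfl
              intro i _
              push_cast
              ring_nf
          _ = Real.log ((N:ℝ) + 1 + c) - Real.log ((↑(0:ℕ):ℝ) + 1 + c) := h
          _ = Real.log ((N:ℝ) + 1 + c) - Real.log (1 + c) := by norm_num
    _ ≤ channelSum Y L N := Finset.sum_le_sum key

lemma channelSum_div_log_tendsto (Y L : ℝ) (hY : 0 < Y) (hL : 0 < L) :
    Tendsto (fun N : ℕ => channelSum Y L N / Real.log N) atTop (nhds (1/L)) := by
  set c := Y / L with hc
  have hcpos : 0 < c := by positivity
  have hlogtop : Tendsto (fun N : ℕ => Real.log N) atTop atTop :=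
    Real.tendsto_log_atTop.comp tendsto_natCast_atTop_atTop
  have hinv : Tendsto (fun N : ℕ => (Real.log N)⁻¹) atTop (nhds 0) :=
    hlogtop.inv_tendsto_atTop
  have hlo : Tendsto (fun N : ℕ => (1/L) * (1 - Real.log (1 + c) * (Real.log N)⁻¹))
      atTop (nhds (1/L)) := by
    have : Tendsto (fun N : ℕ => 1 - Real.log (1 + c) * (Real.log N)⁻¹) atTop (nhds 1) := by
      have := (tendsto_const_nhds.mul hinv :
        Tendsto (fun N : ℕ => Real.log (1 + c) * (Real.log N)⁻¹) atTop (nhds (Real.log (1+c) * 0)))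
      rw [mul_zero] at this
      simpa using tendsto_const_nhds.sub this
    have h2 := (tendsto_const_nhds.mul this :
      Tendsto (fun N : ℕ => (1/L) * (1 - Real.log (1 + c) * (Real.log N)⁻¹)) atTop
        (nhds ((1/L) * 1)))
    simpa using h2
  have hhi : Tendsto (fun N : ℕ => (1/L) * (1 + Real.log N) / Real.log N)
      atTop (nhds (1/L)) := by
    have h1 : Tendsto (fun N : ℕ => (1/L) * ((Real.log N)⁻¹ + 1)) atTop (nhds (1/L)) := by
      have := (tendsto_const_nhds.mul (hinv.add tendsto_const_nhds) :
        Tendsto (fun N : ℕ => (1/L) * ((Real.log N)⁻¹ + 1)) atTop (nhds ((1/L) * (0 + 1))))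
      simpa using this
    apply h1.congr'
    filter_upwards [hlogtop.eventually_gt_atTop 0] with N hN
    field_simp
  apply tendsto_of_tendsto_of_tendsto_of_le_of_le' hlo hhi
  · filter_upwards [hlogtop.eventually_gt_atTop 0, eventually_ge_atTop 1] with N hN hN1
    have hle := le_channelSum Y L hY hL N
    have hNc : (1:ℝ) ≤ (N:ℝ) := by exact_mod_cast hN1
    have hmono : Real.log (N:ℝ) ≤ Real.log ((N:ℝ) + 1 + c) :=
      Real.log_le_log (by positivity) (by linarith)
    have step : (1/L) * (Real.log (N:ℝ) - Real.log (1 + c)) ≤ channelSum Y L N := by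
      refine le_trans ?_ hle
      apply mul_le_mul_of_nonneg_left (by linarith) (by positivity)
    have : (1/L) * (1 - Real.log (1 + c) * (Real.log N)⁻¹)
        = (1/L) * (Real.log (N:ℝ) - Real.log (1 + c)) / Real.log N := by
      field_simp
    rw [this]
    exact div_le_div_of_nonneg_right step hN.le
  · filter_upwards [hlogtop.eventually_gt_atTop 0] with N hN
    exact div_le_div_of_nonneg_right (channelSum_le Y L hY hL N) hN.le

theorem cpass_multiplexing_gain_scaling (YF YB L η P N₀ : ℝ) (hYF : 0 < YF)
    (hYB : 0 < YB) (hL : 0 < L) (hη : η ≠ 0) (hP : 0 < P) (hN₀ : 0 < N₀) :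
    Tendsto (fun N : ℕ =>
        (N : ℝ)^2 *
          ((P / (2 * N₀)) *
            ((η / Real.sqrt N) * channelSum YF L N)^2 *
            ((η / Real.sqrt N) * channelSum YB L N)^2) / (Real.log N)^4)
      atTop (nhds (P * η^4 / (2 * N₀ * L^4))) := by
  have hF := channelSum_div_log_tendsto YF L hYF hL
  have hB := channelSum_div_log_tendsto YB L hYB hL
  have hmain : Tendsto (fun N : ℕ =>
      (P / (2 * N₀)) * η^4 * (channelSum YF L N / Real.log N)^2 *
        (channelSum YB L N / Real.log N)^2) atTop
      (nhds ((P / (2 * N₀)) * η^4 * (1/L)^2 * (1/L)^2)) := by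
    exact (tendsto_const_nhds.mul (hF.pow 2)).mul (hB.pow 2)
  have heq : (P / (2 * N₀)) * η^4 * (1/L)^2 * (1/L)^2 = P * η^4 / (2 * N₀ * L^4) := by
    field_simp
  rw [heq] at hmain
  apply hmain.congr'
  have hlogtop : Tendsto (fun N : ℕ => Real.log N) atTop atTop :=
    Real.tendsto_log_atTop.comp tendsto_natCast_atTop_atTop
  filter_upwards [hlogtop.eventually_gt_atTop 0, eventually_ge_atTop 1] with N hN hN1
  have hNpos : (0:ℝ) < N := by exact_mod_cast hN1
  have hsq : Real.sqrt N ≠ 0 := by positivity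
  have hsq2 : (Real.sqrt N)^2 = (N:ℝ) := Real.sq_sqrt hNpos.le
  have hlogne : Real.log N ≠ 0 := hN.ne'
  field_simp [hsq2]
  rw [show (Real.sqrt (N:ℝ))^4 = ((Real.sqrt N)^2)^2 by ring, hsq2]
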